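/- arXiv:0809.3553 — 4 statements merged into one kernel-verified Lean document; each statement's English description precedes it below -/
import Mathlib

section
/- Let ν > 0, let g : ℝ → ℝ be a smooth function with g(0) = g'(0) = 0, and set β = (2π)²ν. Define, for (x,t) ∈ ℝ³ × [0,∞), u₁(x,t) = e^{−βt}·2π(sin(2π(x₂+g(t))) + cos(2π(x₃+g(t)))) − g'(t), u₂(x,t) = e^{−βt}·2π(sin(2π(x₃+g(t))) + cos(2π(x₁+g(t)))) − g'(t), u₃(x,t) = e^{−βt}·2π(sin(2π(x₁+g(t))) + cos(2π(x₂+g(t)))) − g'(t), and p(x,t) = −e^{−2βt}(2π)²[sin(2π(x₁+g(t)))cos(2π(x₂+g(t))) + sin(2π(x₂+g(t)))cos(2π(x₃+g(t))) + sin(2π(x₃+g(t)))cos(2π(x₁+g(t)))] + g''(t)(x₁+x₂+x₃). Then u and p are smooth, u satisfies ∂u_i/∂t + Σ_{j=1}³ u_j ∂u_i/∂x_j = ν Δu_i − ∂p/∂x_i for all x ∈ ℝ³, t ≥ 0, and i = 1,2,3 (zero external force), div u(·,t) = 0 for all t ≥ 0, and u(x,0) = u⁰(x) where u⁰₁(x)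 = 2π sin(2πx₂) + 2π cos(2πx₃), u⁰₂(x) = 2π sin(2πx₃) + 2π cos(2πx₁), u⁰₃(x) = 2π sin(2πx₁) + 2π cos(2πx₂). -/
/-!
The steady field `v i y = a (sin (a y_{i+1}) + cos (a y_{i+2}))` is a Beltrami field
(`curl v = -a v`) and an eigenfunction of the Laplacian (`Δ v = -a² v`). The first property
makes the nonlinearity a gradient, `(v · ∇) v = ∇ (|v|² / 2)`, absorbed by the pressure
`-a² ∑ sin (a y_k) cos (a y_{k+1}) = -|v|²/2 + const`; the second makes `e^{-βt} v` solve the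
heat part with `β = a² ν`. Translating space by `g(t)` in every coordinate and subtracting the
uniform velocity `g'(t)` is a change to an accelerated frame, whose acceleration `g''(t)` is
balanced by the linear pressure term `g''(t) (x₀ + x₁ + x₂)`.
-/

open Real

/-- Partial derivative of `f : ℝ³ → ℝ` in the `j`-th coordinate direction. -/
noncomputable def pd (f : (Fin 3 → ℝ) → ℝ) (j : Fin 3) (x : Fin 3 → ℝ) : ℝ :=
  fderiv ℝ f x (Pi.single j 1)

/-- Spatial Laplacian of `f : ℝ³ → ℝ`. -/
noncomputable def lap (f : (Fin 3 → ℝ) → ℝ) (x : Fin 3 → ℝ) : ℝ :=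
  ∑ j : Fin 3, pd (pd f j) j x

/-- One-sided (within `[0,∞)`) time derivative. -/
noncomputable def td (f : ℝ → ℝ) (t : ℝ) : ℝ :=
  derivWithin f (Set.Ici 0) t

open ContinuousLinearMap

lemma sum_mul_pd (f : (Fin 3 → ℝ) → ℝ) (x v : Fin 3 → ℝ) :
    ∑ j, v j * pd f j x = fderiv ℝ f x v := by
  conv_rhs => rw [pi_eq_sum_univ' v]
  simp [pd, map_sum, map_smul, smul_eq_mul]

lemma hasFDerivAt_sin_apply (a c : ℝ) (k : Fin 3) (x : Fin 3 → ℝ) :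
    HasFDerivAt (fun y : Fin 3 → ℝ => sin (a * (y k + c)))
      ((a * cos (a * (x k + c))) • proj (R := ℝ) (φ := fun _ : Fin 3 => ℝ) k) x := by
  have h : HasDerivAt (fun s => sin (a * (s + c))) (a * cos (a * (x k + c))) (x k) := by
    simpa [mul_comm] using ((hasDerivAt_id (x k)).add_const c |>.const_mul a).sin
  exact h.comp_hasFDerivAt x (hasFDerivAt_apply (𝕜 := ℝ) k x)

lemma hasFDerivAt_cos_apply (a c : ℝ) (k : Fin 3) (x : Fin 3 → ℝ) :
    HasFDerivAt (fun y : Fin 3 → ℝ => cos (a * (y k + c)))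
      ((-(a * sin (a * (x k + c)))) • proj (R := ℝ) (φ := fun _ : Fin 3 => ℝ) k) x := by
  have h : HasDerivAt (fun s => cos (a * (s + c))) (-(a * sin (a * (x k + c)))) (x k) := by
    simpa [mul_comm] using ((hasDerivAt_id (x k)).add_const c |>.const_mul a).cos
  exact h.comp_hasFDerivAt x (hasFDerivAt_apply (𝕜 := ℝ) k x)

noncomputable def abcField (A a c d : ℝ) (i : Fin 3) (y : Fin 3 → ℝ) : ℝ :=
  A * (sin (a * (y (i + 1) + c)) + cos (a * (y (i + 2) + c))) - d

noncomputable def abcPressure (B a c G : ℝ) (y : Fin 3 → ℝ) : ℝ :=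
  B * ∑ k, sin (a * (y k + c)) * cos (a * (y (k + 1) + c)) + G * ∑ k, y k

section

variable (A a c d : ℝ) (i : Fin 3) (x : Fin 3 → ℝ)

lemma hasFDerivAt_abcField :
    HasFDerivAt (abcField A a c d i)
      ((A * a * cos (a * (x (i + 1) + c))) • proj (R := ℝ) (φ := fun _ : Fin 3 => ℝ) (i + 1)
        - (A * a * sin (a * (x (i + 2) + c))) • proj (i + 2)) x := by
  refine ((((hasFDerivAt_sin_apply a c (i + 1) x).add
    (hasFDerivAt_cos_apply a c (i + 2) x)).const_mul A).sub_const d).congr_fderiv ?_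
  ext v
  simp only [smul_add, add_apply, smul_apply, proj_apply, smul_eq_mul, sub_apply]
  ring

lemma pd_abcField (j : Fin 3) :
    pd (abcField A a c d i) j x =
      A * a * (cos (a * (x (i + 1) + c)) * (Pi.single j 1 : Fin 3 → ℝ) (i + 1)
        - sin (a * (x (i + 2) + c)) * (Pi.single j 1 : Fin 3 → ℝ) (i + 2)) := by
  rw [pd, (hasFDerivAt_abcField A a c d i x).fderiv]
  simp only [sub_apply, smul_apply, proj_apply, smul_eq_mul]
  ring

lemma sum_pd_abcField_self : ∑ i, pd (abcField A a c d i) i x = 0 := by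
  have hne : ∀ i : Fin 3, i + 1 ≠ i ∧ i + 2 ≠ i := by decide
  simp [pd_abcField, hne]

lemma sum_abcField_mul_pd_abcField :
    ∑ j, abcField A a c d j x * pd (abcField A a c d i) j x =
      A ^ 2 * a * (cos (a * (x i + c)) * cos (a * (x (i + 1) + c))
        - sin (a * (x (i + 2) + c)) * sin (a * (x i + c)))
      - d * A * a * (cos (a * (x (i + 1) + c)) - sin (a * (x (i + 2) + c))) := by
  have hcyc : ∀ i : Fin 3,
      i + 1 + 1 = i + 2 ∧ i + 1 + 2 = i ∧ i + 2 + 1 = i ∧ i + 2 + 2 = i + 1 := by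
    decide
  rw [sum_mul_pd, (hasFDerivAt_abcField A a c d i x).fderiv]
  simp only [abcField, sub_apply, smul_apply, proj_apply, hcyc, smul_eq_mul]
  ring

lemma lap_abcField :
    lap (abcField A a c d i) x =
      -(a ^ 2 * A * (sin (a * (x (i + 1) + c)) + cos (a * (x (i + 2) + c)))) := by
  have h : ∀ j, HasFDerivAt (pd (abcField A a c d i) j)
      ((A * a * (Pi.single j 1 : Fin 3 → ℝ) (i + 1)) • (-(a * sin (a * (x (i + 1) + c)))) •
          proj (R := ℝ) (φ := fun _ : Fin 3 => ℝ) (i + 1)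
        - (A * a * (Pi.single j 1 : Fin 3 → ℝ) (i + 2)) • (a * cos (a * (x (i + 2) + c))) •
          proj (i + 2)) x := by
    intro j
    have hfun : pd (abcField A a c d i) j = fun y =>
        A * a * (Pi.single j 1 : Fin 3 → ℝ) (i + 1) * cos (a * (y (i + 1) + c))
          - A * a * (Pi.single j 1 : Fin 3 → ℝ) (i + 2) * sin (a * (y (i + 2) + c)) := by
      funext y; rw [pd_abcField]; ring
    rw [hfun]
    exact ((hasFDerivAt_cos_apply a c (i + 1) x).const_mul _).sub
      ((hasFDerivAt_sin_apply a c (i + 2) x).const_mul _) |>.congr_fderiv (by ext v; simp)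
  simp only [lap, pd, (h _).fderiv, sub_apply, smul_apply, proj_apply, smul_eq_mul,
    Pi.single_apply, mul_ite, mul_one, mul_zero, ite_mul, zero_mul, Finset.sum_sub_distrib,
    Finset.sum_ite_eq, Finset.mem_univ, if_true]
  ring

lemma hasDerivAt_abcField_time {β t g₁ g₂ : ℝ} {g g' : ℝ → ℝ} (hg : HasDerivAt g g₁ t)
    (hg' : HasDerivAt g' g₂ t) :
    HasDerivAt (fun s => abcField (exp (-β * s) * a) a (g s) (g' s) i x)
      (-β * exp (-β * t) * a * (sin (a * (x (i + 1) + g t)) + cos (a * (x (i + 2) + g t)))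
        + exp (-β * t) * a ^ 2 * g₁ * (cos (a * (x (i + 1) + g t)) - sin (a * (x (i + 2) + g t)))
        - g₂) t := by
  have hexp : HasDerivAt (fun s => exp (-β * s)) (-β * exp (-β * t)) t := by
    simpa [mul_comm] using ((hasDerivAt_id t).const_mul (-β)).exp
  have harg : ∀ w, HasDerivAt (fun s => a * (w + g s)) (a * g₁) t :=
    fun w => (hg.const_add w).const_mul a
  refine ((hexp.mul_const a).mul ((harg _).sin.add (harg _).cos)).sub hg' |>.congr_deriv ?_
  simp only [Pi.add_apply]
  ring

variable (B G : ℝ)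

lemma pd_abcPressure :
    pd (abcPressure B a c G) i x =
      B * a * (cos (a * (x i + c)) * cos (a * (x (i + 1) + c))
        - sin (a * (x (i + 2) + c)) * sin (a * (x i + c))) + G := by
  have H : HasFDerivAt (abcPressure B a c G) _ x :=
    ((HasFDerivAt.fun_sum (u := Finset.univ) fun k _ => (hasFDerivAt_sin_apply a c k x).fun_mul
      (hasFDerivAt_cos_apply a c (k + 1) x)).const_mul B).add
      ((HasFDerivAt.fun_sum (u := Finset.univ) fun k _ =>
        hasFDerivAt_apply (𝕜 := ℝ) k x).const_mul G)
  rw [pd, H.fderiv]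
  fin_cases i <;>
    simp only [Fin.sum_univ_three, Fin.reduceFinMk, Fin.isValue, Fin.reduceAdd, add_apply,
      smul_apply, proj_apply, smul_eq_mul, Pi.single_eq_same, ne_eq, Fin.reduceEq,
      not_false_eq_true, Pi.single_eq_of_ne] <;>
    ring

end

theorem stmt1_general (ν : ℝ)
    (g : ℝ → ℝ) (hg : ContDiff ℝ (⊤ : ℕ∞) g) (hg0 : g 0 = 0) (hg'0 : deriv g 0 = 0)
    (β : ℝ) (hβ : β = (2 * π) ^ 2 * ν)
    (u : Fin 3 → (Fin 3 → ℝ) → ℝ → ℝ) (p : (Fin 3 → ℝ) → ℝ → ℝ)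
    (hu0 : ∀ x t, u 0 x t =
      Real.exp (-β * t) * (2 * π) *
        (Real.sin (2 * π * (x 1 + g t)) + Real.cos (2 * π * (x 2 + g t))) - deriv g t)
    (hu1 : ∀ x t, u 1 x t =
      Real.exp (-β * t) * (2 * π) *
        (Real.sin (2 * π * (x 2 + g t)) + Real.cos (2 * π * (x 0 + g t))) - deriv g t)
    (hu2 : ∀ x t, u 2 x t =
      Real.exp (-β * t) * (2 * π) *
        (Real.sin (2 * π * (x 0 + g t)) + Real.cos (2 * π * (x 1 + g t))) - deriv g t)
    (hp : ∀ x t, p x t =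
      -(Real.exp (-(2 * β) * t)) * (2 * π) ^ 2 *
        (Real.sin (2 * π * (x 0 + g t)) * Real.cos (2 * π * (x 1 + g t)) +
         Real.sin (2 * π * (x 1 + g t)) * Real.cos (2 * π * (x 2 + g t)) +
         Real.sin (2 * π * (x 2 + g t)) * Real.cos (2 * π * (x 0 + g t))) +
      deriv (deriv g) t * (x 0 + x 1 + x 2)) :
    -- u and p are smooth on ℝ³ × [0,∞)
    (∀ i : Fin 3, ContDiffOn ℝ (⊤ : ℕ∞)
      (fun q : (Fin 3 → ℝ) × ℝ => u i q.1 q.2) (Set.univ ×ˢ Set.Ici 0)) ∧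
    ContDiffOn ℝ (⊤ : ℕ∞)
      (fun q : (Fin 3 → ℝ) × ℝ => p q.1 q.2) (Set.univ ×ˢ Set.Ici 0) ∧
    -- Navier–Stokes equations with zero external force
    (∀ x : Fin 3 → ℝ, ∀ t : ℝ, 0 ≤ t → ∀ i : Fin 3,
      td (u i x) t + ∑ j : Fin 3, u j x t * pd (fun y => u i y t) j x =
        ν * lap (fun y => u i y t) x - pd (fun y => p y t) i x) ∧
    -- divergence-free
    (∀ x : Fin 3 → ℝ, ∀ t : ℝ, 0 ≤ t →
      ∑ i : Fin 3, pd (fun y => u i y t) i x = 0) ∧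
    -- initial condition
    (∀ x : Fin 3 → ℝ,
      u 0 x 0 = 2 * π * Real.sin (2 * π * x 1) + 2 * π * Real.cos (2 * π * x 2) ∧
      u 1 x 0 = 2 * π * Real.sin (2 * π * x 2) + 2 * π * Real.cos (2 * π * x 0) ∧
      u 2 x 0 = 2 * π * Real.sin (2 * π * x 0) + 2 * π * Real.cos (2 * π * x 1)) := by
  have hg' : ContDiff ℝ (⊤ : ℕ∞) (deriv g) := (contDiff_infty_iff_deriv.mp hg).2
  have hg'' : ContDiff ℝ (⊤ : ℕ∞) (deriv (deriv g)) := (contDiff_infty_iff_deriv.mp hg').2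
  have hu_abc : ∀ i x t, u i x t =
      abcField (exp (-β * t) * (2 * π)) (2 * π) (g t) (deriv g t) i x := by
    intro i x t
    fin_cases i <;> simp [abcField, hu0, hu1, hu2]
  have hp_abc : ∀ x t, p x t = abcPressure (-exp (-(2 * β) * t) * (2 * π) ^ 2) (2 * π) (g t)
      (deriv (deriv g) t) x := by
    intro x t
    simp [abcPressure, hp, Fin.sum_univ_three, add_assoc]
  refine ⟨fun i => ?_, ?_, fun x t ht i => ?_, fun x t _ => ?_, fun x => ?_⟩
  · simp only [hu_abc, abcField]
    fun_prop
  · simp only [hp]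
    fun_prop
  · have hgt := (hg.differentiable (by simp) t).hasDerivAt
    have hg't := (hg'.differentiable (by simp) t).hasDerivAt
    have hexp : exp (-(2 * β) * t) = exp (-β * t) ^ 2 := by
      rw [sq, ← exp_add]
      ring_nf
    rw [td, funext (hu_abc i x), (hasDerivAt_abcField_time _ _ _ hgt hg't).hasDerivWithinAt
      |>.derivWithin (uniqueDiffOn_Ici 0 t ht)]
    simp only [hu_abc, hp_abc]
    rw [sum_abcField_mul_pd_abcField, lap_abcField, pd_abcPressure, hexp, hβ]
    ring
  · simp only [hu_abc]
    exact sum_pd_abcField_self _ _ _ _ x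
  · simp [hu0, hu1, hu2, hg0, hg'0, mul_add]

/-- Lemma 1: the explicit family of solutions, parametrized by a smooth `g`
with `g(0) = g'(0) = 0`, of the Navier–Stokes equations with zero force and
initial data `u⁰`. -/
theorem stmt1 (ν : ℝ) (hν : 0 < ν)
    (g : ℝ → ℝ) (hg : ContDiff ℝ (⊤ : ℕ∞) g) (hg0 : g 0 = 0) (hg'0 : deriv g 0 = 0)
    (β : ℝ) (hβ : β = (2 * π) ^ 2 * ν)
    (u : Fin 3 → (Fin 3 → ℝ) → ℝ → ℝ) (p : (Fin 3 → ℝ) → ℝ → ℝ)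
    (hu0 : ∀ x t, u 0 x t =
      Real.exp (-β * t) * (2 * π) *
        (Real.sin (2 * π * (x 1 + g t)) + Real.cos (2 * π * (x 2 + g t))) - deriv g t)
    (hu1 : ∀ x t, u 1 x t =
      Real.exp (-β * t) * (2 * π) *
        (Real.sin (2 * π * (x 2 + g t)) + Real.cos (2 * π * (x 0 + g t))) - deriv g t)
    (hu2 : ∀ x t, u 2 x t =
      Real.exp (-β * t) * (2 * π) *
        (Real.sin (2 * π * (x 0 + g t)) + Real.cos (2 * π * (x 1 + g t))) - deriv g t)
    (hp : ∀ x t, p x t =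
      -(Real.exp (-(2 * β) * t)) * (2 * π) ^ 2 *
        (Real.sin (2 * π * (x 0 + g t)) * Real.cos (2 * π * (x 1 + g t)) +
         Real.sin (2 * π * (x 1 + g t)) * Real.cos (2 * π * (x 2 + g t)) +
         Real.sin (2 * π * (x 2 + g t)) * Real.cos (2 * π * (x 0 + g t))) +
      deriv (deriv g) t * (x 0 + x 1 + x 2)) :
    -- u and p are smooth on ℝ³ × [0,∞)
    (∀ i : Fin 3, ContDiffOn ℝ (⊤ : ℕ∞)
      (fun q : (Fin 3 → ℝ) × ℝ => u i q.1 q.2) (Set.univ ×ˢ Set.Ici 0)) ∧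
    ContDiffOn ℝ (⊤ : ℕ∞)
      (fun q : (Fin 3 → ℝ) × ℝ => p q.1 q.2) (Set.univ ×ˢ Set.Ici 0) ∧
    -- Navier–Stokes equations with zero external force
    (∀ x : Fin 3 → ℝ, ∀ t : ℝ, 0 ≤ t → ∀ i : Fin 3,
      td (u i x) t + ∑ j : Fin 3, u j x t * pd (fun y => u i y t) j x =
        ν * lap (fun y => u i y t) x - pd (fun y => p y t) i x) ∧
    -- divergence-free
    (∀ x : Fin 3 → ℝ, ∀ t : ℝ, 0 ≤ t →
      ∑ i : Fin 3, pd (fun y => u i y t) i x = 0) ∧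
    -- initial condition
    (∀ x : Fin 3 → ℝ,
      u 0 x 0 = 2 * π * Real.sin (2 * π * x 1) + 2 * π * Real.cos (2 * π * x 2) ∧
      u 1 x 0 = 2 * π * Real.sin (2 * π * x 2) + 2 * π * Real.cos (2 * π * x 0) ∧
      u 2 x 0 = 2 * π * Real.sin (2 * π * x 0) + 2 * π * Real.cos (2 * π * x 1)) :=
  stmt1_general ν g hg hg0 hg'0 β hβ u p hu0 hu1 hu2 hp
end

section
/- Let ν > 0, let b₁,b₂,b₃ ∈ ℝ and nonzero α₁,α₂,α₃ ∈ ℝ satisfy Σ_{j=1}³ b_j/α_j = 0, let g₀ : ℝ → ℝ be smooth with g₀(0) = 0, let g : ℝ → ℝ be the smooth function with g(0) = 0 and g'(t) = g₀(t)·Σ_{j=1}³ 1/α_j, and set β = −ν Σ_{j=1}³ 1/α_j². Define u_i(x,t) = b_i e^{βt} sin(Σ_{s=1}³ x_s/α_s + g(t)) − g₀(t) for i = 1,2,3 and p(x,t) = g₀'(t)(x₁+x₂+x₃). Then (u,p) is C^∞ on ℝ³ × [0,∞), satisfies ∂u_i/∂t + Σ_j u_j ∂u_i/∂x_j = ν Δu_i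 − ∂p/∂x_i (zero external force) and div u = 0 everywhere, and u(x,0) = u⁰(x) where u⁰_i(x) = b_i sin(Σ_{s=1}³ x_s/α_s). -/
open Real

/-!
Every `u_i(·, t)` is a function of the single linear form `L x = Σ x_s/α_s`, so its partial
derivatives are `f'(L x)/α_j` and its Laplacian is `f''(L x) Σ 1/α_j²`. Hence `div u` is a
multiple of `Σ b_j/α_j = 0`; in the convective term the same sum kills the wave part of `u_j`,
leaving `-g₀ (Σ 1/α_j) ∂_L u_i = -g' ∂_L u_i`, which cancels the phase drift in `∂_t u_i`; the
viscous term `ν Δu_i` equals `β (u_i + g₀)` and cancels the exponential decay; and the constant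
pressure gradient `g₀'` cancels `-g₀'`.
-/

section weightedSum

variable {ι : Type*} [Fintype ι] (a : ι → ℝ)

noncomputable def weightedSum : (ι → ℝ) →L[ℝ] ℝ :=
  ∑ s, a s • ContinuousLinearMap.proj s

@[simp]
theorem weightedSum_apply (x : ι → ℝ) : weightedSum a x = ∑ s, a s * x s := by
  simp [weightedSum]

@[simp]
theorem weightedSum_single [DecidableEq ι] (j : ι) : weightedSum a (Pi.single j 1) = a j := by
  simp [Pi.single_apply]

end weightedSum

theorem pd_comp_clm {f : ℝ → ℝ} (L : (Fin 3 → ℝ) →L[ℝ] ℝ) {x : Fin 3 → ℝ}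
    (hf : DifferentiableAt ℝ f (L x)) (j : Fin 3) :
    pd (fun y => f (L y)) j x = deriv f (L x) * L (Pi.single j 1) := by
  have h : HasFDerivAt (fun y => f (L y)) (deriv f (L x) • L) x :=
    hf.hasDerivAt.comp_hasFDerivAt x L.hasFDerivAt
  rw [pd, h.fderiv]
  rfl

theorem lap_comp_clm {f : ℝ → ℝ} (hf : Differentiable ℝ f) (hf' : Differentiable ℝ (deriv f))
    (L : (Fin 3 → ℝ) →L[ℝ] ℝ) (x : Fin 3 → ℝ) :
    lap (fun y => f (L y)) x = deriv (deriv f) (L x) * ∑ j, L (Pi.single j 1) ^ 2 := by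
  have hpd (j : Fin 3) :
      pd (fun y => f (L y)) j = fun y => (fun s => deriv f s * L (Pi.single j 1)) (L y) :=
    funext fun y => pd_comp_clm L (hf _) j
  simp only [lap, hpd, Finset.mul_sum]
  refine Finset.sum_congr rfl fun j _ => ?_
  rw [pd_comp_clm L ((hf' _).mul_const _), deriv_mul_const (hf' _)]
  ring

theorem deriv_mul_sin_add_sub_const (c d e : ℝ) :
    deriv (fun s => c * sin (s + d) - e) = fun s => c * cos (s + d) := by
  funext s; simp

theorem deriv_mul_cos_add (c d : ℝ) :
    deriv (fun s => c * cos (s + d)) = fun s => -(c * sin (s + d)) := by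
  funext s; simp

theorem pd_planeWave (α : Fin 3 → ℝ) (c d e : ℝ) (j : Fin 3) (x : Fin 3 → ℝ) :
    pd (fun y => c * sin (∑ s, y s / α s + d) - e) j x = c * cos (∑ s, x s / α s + d) / α j := by
  have h := pd_comp_clm (f := fun s => c * sin (s + d) - e) (weightedSum fun s => (α s)⁻¹)
    (x := x) (by fun_prop) j
  simp only [weightedSum_single, deriv_mul_sin_add_sub_const] at h
  simp only [weightedSum_apply, inv_mul_eq_div] at h
  rw [h, div_eq_mul_inv]

theorem lap_planeWave (α : Fin 3 → ℝ) (c d e : ℝ) (x : Fin 3 → ℝ) :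
    lap (fun y => c * sin (∑ s, y s / α s + d) - e) x =
      -(c * sin (∑ s, x s / α s + d)) * ∑ j, 1 / α j ^ 2 := by
  have h := lap_comp_clm (f := fun s => c * sin (s + d) - e) (by fun_prop)
    (by rw [deriv_mul_sin_add_sub_const]; fun_prop) (weightedSum fun s => (α s)⁻¹) x
  simp only [weightedSum_single, deriv_mul_sin_add_sub_const, deriv_mul_cos_add] at h
  simp only [weightedSum_apply, inv_mul_eq_div] at h
  simp only [h, one_div, inv_pow]

theorem pd_const_mul_sum_coords (C : ℝ) (i : Fin 3) (x : Fin 3 → ℝ) :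
    pd (fun y : Fin 3 → ℝ => C * (y 0 + y 1 + y 2)) i x = C := by
  have h := pd_comp_clm (f := fun s => C * s) (weightedSum 1) (x := x) (by fun_prop) i
  simp only [weightedSum_single] at h
  simp only [weightedSum_apply, Fin.sum_univ_three] at h
  simpa using h

theorem td_eq_deriv {f : ℝ → ℝ} {t : ℝ} (hf : DifferentiableAt ℝ f t) (ht : 0 ≤ t) :
    td f t = deriv f t :=
  hf.derivWithin (uniqueDiffOn_Ici 0 t ht)

theorem hasDerivAt_planeWave_time {g g₀ : ℝ → ℝ} (hg : Differentiable ℝ g)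
    (hg₀ : Differentiable ℝ g₀) (c β S t : ℝ) :
    HasDerivAt (fun τ => c * exp (β * τ) * sin (S + g τ) - g₀ τ)
      (c * exp (β * t) * (β * sin (S + g t) + cos (S + g t) * deriv g t) - deriv g₀ t) t := by
  have h := ((((hasDerivAt_id' t).const_mul β).exp.const_mul c).fun_mul
    ((hg t).hasDerivAt.const_add S).sin).fun_sub (hg₀ t).hasDerivAt
  exact h.congr_deriv (by ring)

theorem stmt8_general (ν : ℝ)
    (b α : Fin 3 → ℝ)
    (hbα : ∑ j : Fin 3, b j / α j = 0)
    (g₀ : ℝ → ℝ) (hg₀ : ContDiff ℝ (⊤ : ℕ∞) g₀) (hg₀0 : g₀ 0 = 0)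
    (g : ℝ → ℝ) (hg : ContDiff ℝ (⊤ : ℕ∞) g) (hg0 : g 0 = 0)
    (hg' : ∀ t, deriv g t = g₀ t * ∑ j : Fin 3, 1 / α j)
    (β : ℝ) (hβ : β = -ν * ∑ j : Fin 3, 1 / (α j) ^ 2)
    (u : Fin 3 → (Fin 3 → ℝ) → ℝ → ℝ) (p : (Fin 3 → ℝ) → ℝ → ℝ)
    (hu : ∀ i x t, u i x t =
      b i * Real.exp (β * t) * Real.sin ((∑ s : Fin 3, x s / α s) + g t) - g₀ t)
    (hp : ∀ x t, p x t = deriv g₀ t * (x 0 + x 1 + x 2)) :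
    -- smoothness on ℝ³ × [0,∞)
    (∀ i : Fin 3, ContDiffOn ℝ (⊤ : ℕ∞)
      (fun q : (Fin 3 → ℝ) × ℝ => u i q.1 q.2) (Set.univ ×ˢ Set.Ici 0)) ∧
    ContDiffOn ℝ (⊤ : ℕ∞)
      (fun q : (Fin 3 → ℝ) × ℝ => p q.1 q.2) (Set.univ ×ˢ Set.Ici 0) ∧
    -- Navier–Stokes with zero external force
    (∀ x : Fin 3 → ℝ, ∀ t : ℝ, 0 ≤ t → ∀ i : Fin 3,
      td (u i x) t + ∑ j : Fin 3, u j x t * pd (fun y => u i y t) j x =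
        ν * lap (fun y => u i y t) x - pd (fun y => p y t) i x) ∧
    -- divergence-free
    (∀ x : Fin 3 → ℝ, ∀ t : ℝ, 0 ≤ t →
      ∑ i : Fin 3, pd (fun y => u i y t) i x = 0) ∧
    -- initial condition
    (∀ x : Fin 3 → ℝ, ∀ i : Fin 3,
      u i x 0 = b i * Real.sin (∑ s : Fin 3, x s / α s)) := by
  have hu_time (i x) : u i x = fun τ =>
      b i * exp (β * τ) * sin (∑ s, x s / α s + g τ) - g₀ τ := funext (hu i x)
  have hu_space (i t) : (fun y => u i y t) = fun y =>
      b i * exp (β * t) * sin (∑ s, y s / α s + g t) - g₀ t := funext fun y => hu i y t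
  have hp_space (t) : (fun y => p y t) = fun y => deriv g₀ t * (y 0 + y 1 + y 2) :=
    funext fun y => hp y t
  have hg₀' : ContDiff ℝ (⊤ : ℕ∞) (deriv g₀) := hg₀.deriv'
  refine ⟨fun i => ?_, ?_, fun x t ht i => ?_, fun x t _ => ?_, fun x i => ?_⟩
  · simp only [hu]
    exact ContDiff.contDiffOn (by fun_prop)
  · simp only [hp]
    exact ContDiff.contDiffOn (by fun_prop)
  · have hdt := hasDerivAt_planeWave_time (hg.differentiable (by simp))
      (hg₀.differentiable (by simp)) (b i) β (∑ s, x s / α s) t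
    rw [hu_time, td_eq_deriv hdt.differentiableAt ht, hdt.deriv, hu_space, lap_planeWave,
      hp_space, pd_const_mul_sum_coords]
    simp only [pd_planeWave, hu]
    set S := ∑ s, x s / α s + g t
    simp only [Fin.sum_univ_three] at hbα hg' hβ ⊢
    linear_combination (b i * exp (β * t) * cos S * exp (β * t) * sin S) * hbα +
      (b i * exp (β * t) * cos S) * hg' t + (b i * exp (β * t) * sin S) * hβ
  · simp only [hu_space, pd_planeWave]
    set S := ∑ s, x s / α s + g t
    simp only [Fin.sum_univ_three] at hbα ⊢
    linear_combination (exp (β * t) * cos S) * hbα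
  · simp [hu, hg0, hg₀0]

/-- Lemma 4: the one-wave family of solutions of Navier–Stokes with zero force,
`u_i(x,t) = b_i e^{βt} sin(Σ x_s/α_s + g(t)) − g₀(t)`,
`p(x,t) = g₀'(t)(x₁+x₂+x₃)`, where `Σ b_j/α_j = 0`,
`g'(t) = g₀(t) Σ 1/α_j` and `β = −ν Σ 1/α_j²`. -/
theorem stmt8 (ν : ℝ) (hν : 0 < ν)
    (b α : Fin 3 → ℝ) (hα : ∀ j, α j ≠ 0)
    (hbα : ∑ j : Fin 3, b j / α j = 0)
    (g₀ : ℝ → ℝ) (hg₀ : ContDiff ℝ (⊤ : ℕ∞) g₀) (hg₀0 : g₀ 0 = 0)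
    (g : ℝ → ℝ) (hg : ContDiff ℝ (⊤ : ℕ∞) g) (hg0 : g 0 = 0)
    (hg' : ∀ t, deriv g t = g₀ t * ∑ j : Fin 3, 1 / α j)
    (β : ℝ) (hβ : β = -ν * ∑ j : Fin 3, 1 / (α j) ^ 2)
    (u : Fin 3 → (Fin 3 → ℝ) → ℝ → ℝ) (p : (Fin 3 → ℝ) → ℝ → ℝ)
    (hu : ∀ i x t, u i x t =
      b i * Real.exp (β * t) * Real.sin ((∑ s : Fin 3, x s / α s) + g t) - g₀ t)
    (hp : ∀ x t, p x t = deriv g₀ t * (x 0 + x 1 + x 2)) :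
    -- smoothness on ℝ³ × [0,∞)
    (∀ i : Fin 3, ContDiffOn ℝ (⊤ : ℕ∞)
      (fun q : (Fin 3 → ℝ) × ℝ => u i q.1 q.2) (Set.univ ×ˢ Set.Ici 0)) ∧
    ContDiffOn ℝ (⊤ : ℕ∞)
      (fun q : (Fin 3 → ℝ) × ℝ => p q.1 q.2) (Set.univ ×ˢ Set.Ici 0) ∧
    -- Navier–Stokes with zero external force
    (∀ x : Fin 3 → ℝ, ∀ t : ℝ, 0 ≤ t → ∀ i : Fin 3,
      td (u i x) t + ∑ j : Fin 3, u j x t * pd (fun y => u i y t) j x =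
        ν * lap (fun y => u i y t) x - pd (fun y => p y t) i x) ∧
    -- divergence-free
    (∀ x : Fin 3 → ℝ, ∀ t : ℝ, 0 ≤ t →
      ∑ i : Fin 3, pd (fun y => u i y t) i x = 0) ∧
    -- initial condition
    (∀ x : Fin 3 → ℝ, ∀ i : Fin 3,
      u i x 0 = b i * Real.sin (∑ s : Fin 3, x s / α s)) :=
  stmt8_general ν b α hbα g₀ hg₀ hg₀0 g hg hg0 hg' β hβ u p hu hp
end

section
/- Let ν > 0, let b₁,b₂,b₃ ∈ ℝ and nonzero α₁,α₂,α₃ ∈ ℝ satisfy Σ_{j=1}³ b_j/α_j = 0, and set β = −ν Σ_{j=1}³ 1/α_j². Let (c_n)_{n≥1} and (d_n)_{n≥1} be real sequences decaying faster than any power: for every K ∈ ℕ the sequence n^K(|c_n|+|d_n|) is bounded. Define u_i(x,t) = b_i Σ_{n=1}^∞ e^{βn²t}(c_n sin(n Σ_{j=1}³ x_j/α_j) + d_n cos(n Σ_{j=1}³ x_j/α_j)) for i = 1,2,3 and p(x,t) = 0. Then u is C^∞ on ℝ³ × [0,∞), satisfies Σ_{j=1}³ u_j ∂u_i/∂x_j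 = 0 and ∂u_i/∂t − ν Δu_i = 0 everywhere (hence solves the Navier–Stokes equations with zero force and pressure p = 0), div u = 0, and u(x,0) = u⁰(x) where u⁰_i(x) = b_i Σ_{n=1}^∞ (c_n sin(n Σ_j x_j/α_j) + d_n cos(n Σ_j x_j/α_j)). -/
/-
Each component is a plane wave `u i x t = b i * H (t, ∑ j, x j / α j)` with one scalar profile `H`,
and `∑ j, b j / α j = 0` says that the amplitude `b` is orthogonal to the wave vector `(1 / α j)`.
This orthogonality kills both the transport term `(u · ∇) u` and `div u`. Every mode
`e^{β k² t} (c sin (k s) + d cos (k s))` of `H` satisfies `∂ₜ H = -β ∂ₛ² H`, and the Laplacian of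
the plane wave is `(∑ j, 1 / α j ^ 2) ∂ₛ² H`, so the choice of `β` turns this into `∂ₜ u = ν Δu`.

Rapid decay of the coefficients justifies differentiating term by term, to every order, on the
half-plane `t ≥ 0`, where `e^{β k² t} ≤ 1`. The series may diverge for `t < 0`, so derivatives are
taken within the closed half-plane, which needs termwise differentiation on a convex rather than
an open set.
-/

open Real

open Set Filter Asymptotics

theorem hasFDerivWithinAt_tsum_of_convex {ι E F : Type*} [NormedAddCommGroup E] [NormedSpace ℝ E]
    [NormedAddCommGroup F] [NormedSpace ℝ F] [CompleteSpace F]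
    {f : ι → E → F} {f' : ι → E → E →L[ℝ] F} {u : ι → ℝ} {s : Set E} {x : E}
    (hs : Convex ℝ s) (hu : Summable u)
    (hf : ∀ n y, y ∈ s → HasFDerivWithinAt (f n) (f' n y) s y)
    (hf' : ∀ n y, y ∈ s → ‖f' n y‖ ≤ u n) (hsum : ∀ y ∈ s, Summable (f · y)) (hx : x ∈ s) :
    HasFDerivWithinAt (fun y => ∑' n, f n y) (∑' n, f' n x) s x := by
  -- Finitely many terms are differentiated directly; the mean value inequality on the convex
  -- set bounds each remaining term by `2 ‖y - x‖ u n`, and their total `u` is small.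
  rw [hasFDerivWithinAt_iff_isLittleO, isLittleO_iff]
  intro ε hε
  obtain ⟨T, hT⟩ : ∃ T : Finset ι, ∑' n : {n // n ∉ T}, u n < ε / 4 :=
    ((tendsto_order.1 (tendsto_tsum_compl_atTop_zero u)).2 _ (by linarith)).exists
  have hfin : HasFDerivWithinAt (fun y => ∑ n ∈ T, f n y) (∑ n ∈ T, f' n x) s x :=
    .fun_sum fun n _ => hf n x hx
  filter_upwards [isLittleO_iff.1 hfin.isLittleO (half_pos hε), self_mem_nhdsWithin]
    with y hTy hy
  set g : ι → F := fun n => f n y - f n x - f' n x (y - x)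
  have hg : ∀ n, ‖g n‖ ≤ 2 * ‖y - x‖ * u n := fun n => by
    have h1 := hs.norm_image_sub_le_of_norm_hasFDerivWithin_le (hf n) (hf' n) hx hy
    have h2 := (f' n x).le_of_opNorm_le (hf' n x hx) (y - x)
    linarith [norm_sub_le (f n y - f n x) (f' n x (y - x))]
  have hL : Summable (f' · x) := .of_norm_bounded hu fun n => hf' n x hx
  have happ : (∑' n, f' n x) (y - x) = ∑' n, f' n x (y - x) :=
    (ContinuousLinearMap.apply ℝ F (y - x)).map_tsum hL
  have hsplit : ∑' n, f n y - ∑' n, f n x - (∑' n, f' n x) (y - x)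
      = ∑ n ∈ T, g n + ∑' n : {n // n ∉ T}, g n := by
    rw [(Summable.of_norm_bounded (hu.mul_left _) hg).sum_add_tsum_subtype_compl T, happ,
      ← (hsum y hy).tsum_sub (hsum x hx),
      ← ((hsum y hy).sub (hsum x hx)).tsum_sub
        (show Summable (f' · x (y - x)) from hL.mapL (.apply ℝ F (y - x)))]
  have htail : ‖∑' n : {n // n ∉ T}, g n‖ ≤ 2 * ‖y - x‖ * ∑' n : {n // n ∉ T}, u n :=
    tsum_of_norm_bounded ((hu.subtype _).hasSum.mul_left _) fun n => hg n
  have hTg : ∑ n ∈ T, g n = ∑ n ∈ T, f n y - ∑ n ∈ T, f n x - (∑ n ∈ T, f' n x) (y - x) := by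
    simp [g, Finset.sum_sub_distrib]
  rw [hsplit]
  calc ‖∑ n ∈ T, g n + ∑' n : {n // n ∉ T}, g n‖
      ≤ ε / 2 * ‖y - x‖ + 2 * ‖y - x‖ * (ε / 4) := by
        refine (norm_add_le _ _).trans (add_le_add (hTg ▸ hTy) (htail.trans ?_))
        gcongr
    _ = ε * ‖y - x‖ := by ring

abbrev RapidDecay (a : ℕ → ℝ) : Prop :=
  SuperpolynomialDecay atTop (fun n : ℕ => (n : ℝ) + 1) a

def freqMul (a : ℕ → ℝ) (n : ℕ) : ℝ := ((n : ℝ) + 1) * a n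

theorem tendsto_natCast_add_one_atTop : Tendsto (fun n : ℕ => (n : ℝ) + 1) atTop atTop :=
  tendsto_atTop_add_const_right _ 1 tendsto_natCast_atTop_atTop

theorem RapidDecay.summable {a : ℕ → ℝ} (ha : RapidDecay a) : Summable a := by
  refine summable_of_isBigO_nat ?_
    ((superpolynomialDecay_iff_isBigO a tendsto_natCast_add_one_atTop).1 ha (-2))
  have := (summable_nat_add_iff 1).2 (Real.summable_nat_pow_inv.2 one_lt_two)
  simpa [zpow_neg] using this

theorem RapidDecay.freqMul {a : ℕ → ℝ} (ha : RapidDecay a) : RapidDecay (freqMul a) :=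
  ha.param_mul

theorem RapidDecay.neg {a : ℕ → ℝ} (ha : RapidDecay a) : RapidDecay (-a) :=
  (ha.const_mul (-1)).congr fun n => neg_one_mul (a n)

theorem RapidDecay.smul {a : ℕ → ℝ} (ha : RapidDecay a) (β : ℝ) : RapidDecay (β • a) :=
  ha.const_mul β

theorem rapidDecay_succ_of_abs_le {c w : ℕ → ℝ} (hcw : ∀ n, |c n| ≤ w n)
    (hw : ∀ K : ℕ, ∃ M : ℝ, ∀ n : ℕ, 1 ≤ n → (n : ℝ) ^ K * w n ≤ M) :
    RapidDecay (fun n => c (n + 1)) := by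
  refine (superpolynomialDecay_iff_abs_isBoundedUnder _ tendsto_natCast_add_one_atTop).2
    fun K => ?_
  obtain ⟨M, hM⟩ := hw K
  refine isBoundedUnder_of ⟨M, fun n => ?_⟩
  have hn := hM (n + 1) n.succ_pos
  push_cast at hn
  rw [abs_mul, abs_of_nonneg (by positivity)]
  exact (mul_le_mul_of_nonneg_left (hcw _) (by positivity)).trans hn

noncomputable def heatMode (β : ℝ) (a e : ℕ → ℝ) (n : ℕ) (p : ℝ × ℝ) : ℝ :=
  exp (β * ((n : ℝ) + 1) ^ 2 * p.1) *
    (a n * sin (((n : ℝ) + 1) * p.2) + e n * cos (((n : ℝ) + 1) * p.2))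

noncomputable def heatSeries (β : ℝ) (a e : ℕ → ℝ) (p : ℝ × ℝ) : ℝ :=
  ∑' n : ℕ, heatMode β a e n p

section HeatSeries

variable {β : ℝ} {a e : ℕ → ℝ}

theorem heatMode_hasFDerivAt (n : ℕ) (p : ℝ × ℝ) :
    HasFDerivAt (heatMode β a e n)
      (heatMode β (β • freqMul (freqMul a)) (β • freqMul (freqMul e)) n p •
          ContinuousLinearMap.fst ℝ ℝ ℝ +
        heatMode β (-freqMul e) (freqMul a) n p • ContinuousLinearMap.snd ℝ ℝ ℝ) p := by
  have hexp := ((hasFDerivAt_fst (𝕜 := ℝ) (p := p)).const_mul (β * ((n : ℝ) + 1) ^ 2)).exp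
  have hphase := (hasFDerivAt_snd (𝕜 := ℝ) (p := p)).const_mul ((n : ℝ) + 1)
  have htrig := (hphase.sin.const_mul (a n)).add (hphase.cos.const_mul (e n))
  refine (hexp.mul htrig).congr_fderiv (ContinuousLinearMap.ext fun v => ?_)
  simp only [heatMode, freqMul, Pi.smul_apply, Pi.neg_apply, smul_eq_mul,
    Pi.add_apply, add_apply, smul_apply,
    ContinuousLinearMap.coe_fst', ContinuousLinearMap.coe_snd']
  ring

theorem abs_heatMode_le (hβ : β ≤ 0) (n : ℕ) {p : ℝ × ℝ} (hp : 0 ≤ p.1) :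
    |heatMode β a e n p| ≤ |a n| + |e n| := by
  have hexp : exp (β * ((n : ℝ) + 1) ^ 2 * p.1) ≤ 1 :=
    exp_le_one_iff.2 (mul_nonpos_of_nonpos_of_nonneg
      (mul_nonpos_of_nonpos_of_nonneg hβ (by positivity)) hp)
  have htrig : |a n * sin (((n : ℝ) + 1) * p.2) + e n * cos (((n : ℝ) + 1) * p.2)|
      ≤ |a n| + |e n| := by
    refine (abs_add_le _ _).trans (add_le_add ?_ ?_) <;> rw [abs_mul]
    · exact mul_le_of_le_one_right (abs_nonneg _) (abs_sin_le_one _)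
    · exact mul_le_of_le_one_right (abs_nonneg _) (abs_cos_le_one _)
  rw [heatMode, abs_mul, abs_exp]
  exact (mul_le_mul hexp htrig (abs_nonneg _) zero_le_one).trans_eq (one_mul _)

theorem summable_heatMode (hβ : β ≤ 0) (ha : RapidDecay a) (he : RapidDecay e) {p : ℝ × ℝ}
    (hp : 0 ≤ p.1) : Summable (heatMode β a e · p) :=
  .of_norm_bounded (ha.summable.abs.add he.summable.abs) fun n => abs_heatMode_le hβ n hp

theorem norm_smul_fst_add_smul_snd_le {E : Type*} [NormedAddCommGroup E] [NormedSpace ℝ E]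
    (A B : ℝ) :
    ‖A • ContinuousLinearMap.fst ℝ E E + B • ContinuousLinearMap.snd ℝ E E‖ ≤ |A| + |B| := by
  refine (norm_add_le _ _).trans (add_le_add ?_ ?_) <;> rw [norm_smul, Real.norm_eq_abs]
  · exact mul_le_of_le_one_right (abs_nonneg A) (ContinuousLinearMap.norm_fst_le ..)
  · exact mul_le_of_le_one_right (abs_nonneg B) (ContinuousLinearMap.norm_snd_le ..)

theorem heatSeries_hasFDerivWithinAt (hβ : β ≤ 0) (ha : RapidDecay a) (he : RapidDecay e)
    {p : ℝ × ℝ} (hp : p ∈ Ici 0 ×ˢ univ) :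
    HasFDerivWithinAt (heatSeries β a e)
      (heatSeries β (β • freqMul (freqMul a)) (β • freqMul (freqMul e)) p •
          ContinuousLinearMap.fst ℝ ℝ ℝ +
        heatSeries β (-freqMul e) (freqMul a) p • ContinuousLinearMap.snd ℝ ℝ ℝ)
      (Ici 0 ×ˢ univ) p := by
  have hta := ha.freqMul.freqMul.smul β
  have hte := he.freqMul.freqMul.smul β
  have hsum_t := summable_heatMode hβ hta hte hp.1
  have hsum_s := summable_heatMode hβ he.freqMul.neg ha.freqMul hp.1
  have hu := ((hta.summable.abs.add hte.summable.abs).add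
    (he.freqMul.neg.summable.abs.add ha.freqMul.summable.abs))
  refine (hasFDerivWithinAt_tsum_of_convex ((convex_Ici 0).prod convex_univ) hu
    (fun n q _ => (heatMode_hasFDerivAt n q).hasFDerivWithinAt)
    (fun n q hq => (norm_smul_fst_add_smul_snd_le _ _).trans
      (add_le_add (abs_heatMode_le hβ n hq.1) (abs_heatMode_le hβ n hq.1)))
    (fun q hq => summable_heatMode hβ ha he hq.1) hp).congr_fderiv ?_
  rw [heatSeries, heatSeries, ← hsum_t.tsum_smul_const, ← hsum_s.tsum_smul_const,
    ← (hsum_t.smul_const _).tsum_add (hsum_s.smul_const _)]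

theorem heatSeries_contDiffOn (hβ : β ≤ 0) (ha : RapidDecay a) (he : RapidDecay e) :
    ContDiffOn ℝ (⊤ : ℕ∞) (heatSeries β a e) (Ici 0 ×ˢ univ) := by
  have hU : UniqueDiffOn ℝ (Ici (0 : ℝ) ×ˢ univ) :=
    (uniqueDiffOn_Ici 0).prod (uniqueDiffOn_univ (𝕜 := ℝ) (E := ℝ))
  refine contDiffOn_infty.2 fun N => ?_
  induction N generalizing a e with
  | zero =>
    rw [Nat.cast_zero, contDiffOn_zero]
    exact fun p hp => (heatSeries_hasFDerivWithinAt hβ ha he hp).continuousWithinAt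
  | succ N ih =>
    rw [Nat.cast_succ, contDiffOn_succ_iff_fderivWithin hU]
    refine ⟨fun p hp => (heatSeries_hasFDerivWithinAt hβ ha he hp).differentiableWithinAt,
      by simp, ContDiffOn.congr ?_ fun p hp =>
        (heatSeries_hasFDerivWithinAt hβ ha he hp).fderivWithin (hU p hp)⟩
    exact ((ih (ha.freqMul.freqMul.smul β) (he.freqMul.freqMul.smul β)).smul
      contDiffOn_const).add ((ih he.freqMul.neg ha.freqMul).smul contDiffOn_const)

theorem heatSeries_hasDerivWithinAt_fst (hβ : β ≤ 0) (ha : RapidDecay a) (he : RapidDecay e)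
    {t : ℝ} (ht : 0 ≤ t) (s : ℝ) :
    HasDerivWithinAt (fun r => heatSeries β a e (r, s))
      (heatSeries β (β • freqMul (freqMul a)) (β • freqMul (freqMul e)) (t, s)) (Ici 0) t := by
  have hline : HasDerivWithinAt (fun r : ℝ => (r, s)) (1, 0) (Ici 0) t :=
    (hasDerivWithinAt_id t _).prodMk (hasDerivWithinAt_const t _ s)
  refine ((heatSeries_hasFDerivWithinAt hβ ha he (mk_mem_prod ht (mem_univ s))
    ).comp_hasDerivWithinAt t hline fun r hr => mk_mem_prod hr (mem_univ s)).congr_deriv ?_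
  simp

theorem heatSeries_hasDerivAt_snd (hβ : β ≤ 0) (ha : RapidDecay a) (he : RapidDecay e)
    {t : ℝ} (ht : 0 ≤ t) (s : ℝ) :
    HasDerivAt (fun z => heatSeries β a e (t, z))
      (heatSeries β (-freqMul e) (freqMul a) (t, s)) s := by
  have hline : HasDerivWithinAt (fun z : ℝ => (t, z)) (0, 1) univ s :=
    (hasDerivWithinAt_const s _ t).prodMk (hasDerivWithinAt_id s _)
  rw [← hasDerivWithinAt_univ]
  refine ((heatSeries_hasFDerivWithinAt hβ ha he (mk_mem_prod ht (mem_univ s))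
    ).comp_hasDerivWithinAt s hline fun z _ => mk_mem_prod ht (mem_univ z)).congr_deriv ?_
  simp

theorem heatSeries_timeDeriv_eq (a e : ℕ → ℝ) (p : ℝ × ℝ) :
    heatSeries β (β • freqMul (freqMul a)) (β • freqMul (freqMul e)) p =
      -β * heatSeries β (-freqMul (freqMul a)) (freqMul (-freqMul e)) p := by
  rw [heatSeries, heatSeries, ← tsum_mul_left]
  congr 1 with n
  simp only [heatMode, freqMul, Pi.smul_apply, Pi.neg_apply, smul_eq_mul]
  ring

end HeatSeries

section PlaneWave

theorem pd_comp_of_hasDerivAt (L : (Fin 3 → ℝ) →L[ℝ] ℝ) {g : ℝ → ℝ} {D : ℝ} {x : Fin 3 → ℝ}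
    (hg : HasDerivAt g D (L x)) (j : Fin 3) :
    pd (fun y => g (L y)) j x = D * L (Pi.single j 1) := by
  have hgL : HasFDerivAt (fun y => g (L y)) (D • L) x := hg.comp_hasFDerivAt x L.hasFDerivAt
  rw [pd, hgL.fderiv]
  rfl

theorem lap_comp_of_hasDerivAt (L : (Fin 3 → ℝ) →L[ℝ] ℝ) {g g' : ℝ → ℝ} {D : ℝ}
    {x : Fin 3 → ℝ} (hg : ∀ z, HasDerivAt g (g' z) z) (hg' : HasDerivAt g' D (L x)) :
    lap (fun y => g (L y)) x = (∑ j, L (Pi.single j 1) ^ 2) * D := by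
  rw [lap, Finset.sum_mul]
  refine Finset.sum_congr rfl fun j _ => ?_
  have hpd : pd (fun y => g (L y)) j = fun y => g' (L y) * L (Pi.single j 1) :=
    funext fun y => pd_comp_of_hasDerivAt L (hg (L y)) j
  rw [hpd, pd_comp_of_hasDerivAt L (hg'.mul_const _) j]
  ring

theorem sum_mul_apply_single {ι : Type*} [Fintype ι] [DecidableEq ι] (L : (ι → ℝ) →L[ℝ] ℝ)
    (b : ι → ℝ) : ∑ j, b j * L (Pi.single j 1) = L b := by
  conv_rhs => rw [pi_eq_sum_univ' b, map_sum]
  simp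

variable {L : (Fin 3 → ℝ) →L[ℝ] ℝ} {b : Fin 3 → ℝ} {g : ℝ → ℝ} {D : ℝ} {x : Fin 3 → ℝ}

theorem sum_mul_pd_planeWave_eq_zero (hb : L b = 0) (hg : HasDerivAt g D (L x)) (i : Fin 3) :
    ∑ j, b j * g (L x) * pd (fun y => b i * g (L y)) j x = 0 := by
  simp only [pd_comp_of_hasDerivAt L (hg.const_mul (b i))]
  calc _ = b i * g (L x) * D * ∑ j, b j * L (Pi.single j 1) := by
        rw [Finset.mul_sum]; congr 1 with j; ring
    _ = 0 := by rw [sum_mul_apply_single, hb, mul_zero]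

theorem sum_pd_planeWave_eq_zero (hb : L b = 0) (hg : HasDerivAt g D (L x)) :
    ∑ i, pd (fun y => b i * g (L y)) i x = 0 := by
  simp only [fun i => pd_comp_of_hasDerivAt L (hg.const_mul (b i)) i]
  calc _ = D * ∑ i, b i * L (Pi.single i 1) := by
        rw [Finset.mul_sum]; congr 1 with i; ring
    _ = 0 := by rw [sum_mul_apply_single, hb, mul_zero]

end PlaneWave

noncomputable def phase {ι : Type*} [Fintype ι] (α : ι → ℝ) : (ι → ℝ) →L[ℝ] ℝ :=
  ∑ j, (α j)⁻¹ • ContinuousLinearMap.proj j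

theorem phase_apply {ι : Type*} [Fintype ι] (α y : ι → ℝ) : phase α y = ∑ j, y j / α j := by
  simp [phase, div_eq_inv_mul]

theorem phase_single {ι : Type*} [Fintype ι] [DecidableEq ι] (α : ι → ℝ) (j : ι) :
    phase α (Pi.single j 1) = (α j)⁻¹ := by
  simp [phase, Pi.single_apply]

theorem heatSeries_planeWave_heat {β ν : ℝ} {a e : ℕ → ℝ} (hβ0 : β ≤ 0) (ha : RapidDecay a)
    (he : RapidDecay e) (L : (Fin 3 → ℝ) →L[ℝ] ℝ) (hβ : β = -ν * ∑ j, L (Pi.single j 1) ^ 2)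
    (C : ℝ) (x : Fin 3 → ℝ) {t : ℝ} (ht : 0 ≤ t) :
    td (fun r => C * heatSeries β a e (r, L x)) t -
      ν * lap (fun y => C * heatSeries β a e (t, L y)) x = 0 := by
  have htd : td (fun r => C * heatSeries β a e (r, L x)) t =
      C * heatSeries β (β • freqMul (freqMul a)) (β • freqMul (freqMul e)) (t, L x) :=
    ((heatSeries_hasDerivWithinAt_fst hβ0 ha he ht _).const_mul C).derivWithin
      (uniqueDiffOn_Ici 0 t ht)
  have hlap := lap_comp_of_hasDerivAt L
    (fun z => (heatSeries_hasDerivAt_snd hβ0 ha he ht z).const_mul C)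
    ((heatSeries_hasDerivAt_snd hβ0 he.freqMul.neg ha.freqMul ht (L x)).const_mul C)
  rw [htd, hlap, heatSeries_timeDeriv_eq, hβ]
  ring

theorem stmt9_general (ν : ℝ) (hν : 0 < ν)
    (b α : Fin 3 → ℝ)
    (hbα : ∑ j : Fin 3, b j / α j = 0)
    (β : ℝ) (hβ : β = -ν * ∑ j : Fin 3, 1 / (α j) ^ 2)
    (c d : ℕ → ℝ)
    (hcd : ∀ K : ℕ, ∃ M : ℝ, ∀ n : ℕ, 1 ≤ n → (n : ℝ) ^ K * (|c n| + |d n|) ≤ M)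
    (u : Fin 3 → (Fin 3 → ℝ) → ℝ → ℝ)
    (hu : ∀ i x t, u i x t =
      b i * ∑' n : ℕ, Real.exp (β * ((n : ℝ) + 1) ^ 2 * t) *
        (c (n + 1) * Real.sin (((n : ℝ) + 1) * ∑ j : Fin 3, x j / α j) +
         d (n + 1) * Real.cos (((n : ℝ) + 1) * ∑ j : Fin 3, x j / α j))) :
    -- smoothness on ℝ³ × [0,∞)
    (∀ i : Fin 3, ContDiffOn ℝ (⊤ : ℕ∞)
      (fun q : (Fin 3 → ℝ) × ℝ => u i q.1 q.2) (Set.univ ×ˢ Set.Ici 0)) ∧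
    -- the transport term vanishes
    (∀ x : Fin 3 → ℝ, ∀ t : ℝ, 0 ≤ t → ∀ i : Fin 3,
      ∑ j : Fin 3, u j x t * pd (fun y => u i y t) j x = 0) ∧
    -- the heat equation holds
    (∀ x : Fin 3 → ℝ, ∀ t : ℝ, 0 ≤ t → ∀ i : Fin 3,
      td (u i x) t - ν * lap (fun y => u i y t) x = 0) ∧
    -- hence Navier–Stokes with zero force and zero pressure
    (∀ x : Fin 3 → ℝ, ∀ t : ℝ, 0 ≤ t → ∀ i : Fin 3,
      td (u i x) t + ∑ j : Fin 3, u j x t * pd (fun y => u i y t) j x =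
        ν * lap (fun y => u i y t) x - pd (fun _ => (0 : ℝ)) i x) ∧
    -- divergence-free
    (∀ x : Fin 3 → ℝ, ∀ t : ℝ, 0 ≤ t →
      ∑ i : Fin 3, pd (fun y => u i y t) i x = 0) ∧
    -- initial condition
    (∀ x : Fin 3 → ℝ, ∀ i : Fin 3,
      u i x 0 = b i * ∑' n : ℕ,
        (c (n + 1) * Real.sin (((n : ℝ) + 1) * ∑ j : Fin 3, x j / α j) +
         d (n + 1) * Real.cos (((n : ℝ) + 1) * ∑ j : Fin 3, x j / α j))) := by
  have ha := rapidDecay_succ_of_abs_le (fun n => le_add_of_nonneg_right (abs_nonneg (d n))) hcd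
  have he := rapidDecay_succ_of_abs_le (fun n => le_add_of_nonneg_left (abs_nonneg (c n))) hcd
  have hβ0 : β ≤ 0 := hβ ▸ mul_nonpos_of_nonpos_of_nonneg (by linarith)
    (Finset.sum_nonneg fun j _ => by positivity)
  have hβL : β = -ν * ∑ j, phase α (Pi.single j 1) ^ 2 := by simp [hβ, phase_single]
  have hb : phase α b = 0 := by rwa [phase_apply]
  have hwave : ∀ i x t, u i x t =
      b i * heatSeries β (fun n => c (n + 1)) (fun n => d (n + 1)) (t, phase α x) :=
    fun i x t => by rw [hu, phase_apply]; rfl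
  have hH := fun t (ht : 0 ≤ t) s => heatSeries_hasDerivAt_snd hβ0 ha he ht s
  have htrans : ∀ x t, 0 ≤ t → ∀ i, ∑ j, u j x t * pd (fun y => u i y t) j x = 0 := by
    intro x t ht i
    simp only [hwave]
    exact sum_mul_pd_planeWave_eq_zero hb (hH t ht _) i
  have hheat : ∀ x t, 0 ≤ t → ∀ i, td (u i x) t - ν * lap (fun y => u i y t) x = 0 := by
    intro x t ht i
    rw [show u i x = _ from funext (hwave i x)]
    simp only [hwave]
    exact heatSeries_planeWave_heat hβ0 ha he _ hβL (b i) x ht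
  refine ⟨fun i => ?_, htrans, hheat, fun x t ht i => ?_, fun x t ht => ?_, fun x i => ?_⟩
  · have hφ : ContDiff ℝ (⊤ : ℕ∞) (fun q : (Fin 3 → ℝ) × ℝ => (q.2, phase α q.1)) :=
      contDiff_snd.prodMk ((phase α).contDiff.comp contDiff_fst)
    simp only [hwave]
    exact contDiffOn_const.mul ((heatSeries_contDiffOn hβ0 ha he).comp
      hφ.contDiffOn fun q hq => mk_mem_prod hq.2 (mem_univ _))
  · have hp : pd (fun _ => (0 : ℝ)) i x = 0 := by simp [pd]
    linarith [hheat x t ht i, htrans x t ht i]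
  · simp only [hwave]
    exact sum_pd_planeWave_eq_zero hb (hH t ht _)
  · simp [hu]

/-- Lemma 5: for rapidly decaying Fourier coefficients `(c_n)`, `(d_n)` (n ≥ 1),
the series `u_i(x,t) = b_i Σ_{n≥1} e^{βn²t}(c_n sin(n Σ x_j/α_j) + d_n cos(n Σ x_j/α_j))`
with `Σ b_j/α_j = 0` and `β = −ν Σ 1/α_j²` is smooth, has vanishing transport
term and satisfies the heat equation, hence solves Navier–Stokes with zero
force and zero pressure, is divergence-free, and attains the series initial
data at `t = 0`. -/
theorem stmt9 (ν : ℝ) (hν : 0 < ν)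
    (b α : Fin 3 → ℝ) (hα : ∀ j, α j ≠ 0)
    (hbα : ∑ j : Fin 3, b j / α j = 0)
    (β : ℝ) (hβ : β = -ν * ∑ j : Fin 3, 1 / (α j) ^ 2)
    (c d : ℕ → ℝ)
    (hcd : ∀ K : ℕ, ∃ M : ℝ, ∀ n : ℕ, 1 ≤ n → (n : ℝ) ^ K * (|c n| + |d n|) ≤ M)
    (u : Fin 3 → (Fin 3 → ℝ) → ℝ → ℝ)
    (hu : ∀ i x t, u i x t =
      b i * ∑' n : ℕ, Real.exp (β * ((n : ℝ) + 1) ^ 2 * t) *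
        (c (n + 1) * Real.sin (((n : ℝ) + 1) * ∑ j : Fin 3, x j / α j) +
         d (n + 1) * Real.cos (((n : ℝ) + 1) * ∑ j : Fin 3, x j / α j))) :
    -- smoothness on ℝ³ × [0,∞)
    (∀ i : Fin 3, ContDiffOn ℝ (⊤ : ℕ∞)
      (fun q : (Fin 3 → ℝ) × ℝ => u i q.1 q.2) (Set.univ ×ˢ Set.Ici 0)) ∧
    -- the transport term vanishes
    (∀ x : Fin 3 → ℝ, ∀ t : ℝ, 0 ≤ t → ∀ i : Fin 3,
      ∑ j : Fin 3, u j x t * pd (fun y => u i y t) j x = 0) ∧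
    -- the heat equation holds
    (∀ x : Fin 3 → ℝ, ∀ t : ℝ, 0 ≤ t → ∀ i : Fin 3,
      td (u i x) t - ν * lap (fun y => u i y t) x = 0) ∧
    -- hence Navier–Stokes with zero force and zero pressure
    (∀ x : Fin 3 → ℝ, ∀ t : ℝ, 0 ≤ t → ∀ i : Fin 3,
      td (u i x) t + ∑ j : Fin 3, u j x t * pd (fun y => u i y t) j x =
        ν * lap (fun y => u i y t) x - pd (fun _ => (0 : ℝ)) i x) ∧
    -- divergence-free
    (∀ x : Fin 3 → ℝ, ∀ t : ℝ, 0 ≤ t →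
      ∑ i : Fin 3, pd (fun y => u i y t) i x = 0) ∧
    -- initial condition
    (∀ x : Fin 3 → ℝ, ∀ i : Fin 3,
      u i x 0 = b i * ∑' n : ℕ,
        (c (n + 1) * Real.sin (((n : ℝ) + 1) * ∑ j : Fin 3, x j / α j) +
         d (n + 1) * Real.cos (((n : ℝ) + 1) * ∑ j : Fin 3, x j / α j))) :=
  stmt9_general ν hν b α hbα β hβ c d hcd u hu
end

section
/- For n = 1,2 let b_{i,n} ∈ ℝ and nonzero α_{i,n} ∈ ℝ (i = 1,2,3) satisfy Σ_{j=1}³ b_{j,n}/α_{j,n} = 0 for n = 1,2, together with b_{i,1}·Σ_{j=1}³ b_{j,2}/α_{j,1} = 1/α_{i,2} and b_{i,2}·Σ_{j=1}³ b_{j,1}/α_{j,2} = 1/α_{i,1} for i = 1,2,3. Then Σ_{j=1}³ 1/(α_{j,1}·α_{j,2}) = 0 and Σ_{j=1}³ 1/α_{j,1}² = Σ_{j=1}³ 1/α_{j,2}². -/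
/-! Each compatibility condition says that the vector `(1/α_{i,n})_i` is a scalar multiple of
`(b_{i,n'})_i`. Substituting this into one factor of each sum turns `Σ 1/(α_{j,1} α_{j,2})`
into a multiple of `Σ b_{j,1}/α_{j,1} = 0`, and both `Σ 1/α_{j,1}²` and `Σ 1/α_{j,2}²` into
the same product `(Σ_j b_{j,2}/α_{j,1}) (Σ_j b_{j,1}/α_{j,2})`. -/

open Finset

theorem sum_one_div_mul_eq_mul_sum_div {ι K : Type*} [Fintype ι] [Field K]
    (a b x : ι → K) (c : K) (h : ∀ i, b i * c = 1 / a i) :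
    ∑ i, 1 / (x i * a i) = c * ∑ i, b i / x i := by
  rw [mul_sum]
  refine sum_congr rfl fun i _ => ?_
  rw [mul_div_assoc', mul_comm c, h, div_div, mul_comm]

theorem stmt11_general
    (b α : Fin 3 → Fin 2 → ℝ)
    (hbα : ∀ n : Fin 2, ∑ j : Fin 3, b j n / α j n = 0)
    (hc1 : ∀ i : Fin 3, b i 0 * ∑ j : Fin 3, b j 1 / α j 0 = 1 / α i 1)
    (hc2 : ∀ i : Fin 3, b i 1 * ∑ j : Fin 3, b j 0 / α j 1 = 1 / α i 0) :
    (∑ j : Fin 3, 1 / (α j 0 * α j 1) = 0) ∧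
    (∑ j : Fin 3, 1 / (α j 0) ^ 2 = ∑ j : Fin 3, 1 / (α j 1) ^ 2) := by
  refine ⟨?_, ?_⟩
  · rw [sum_one_div_mul_eq_mul_sum_div (α · 1) (b · 0) (α · 0) _ hc1, hbα 0, mul_zero]
  · simp only [sq]
    rw [sum_one_div_mul_eq_mul_sum_div (α · 0) (b · 1) (α · 0) _ hc2,
      sum_one_div_mul_eq_mul_sum_div (α · 1) (b · 0) (α · 1) _ hc1, mul_comm]

/-- The compatibility conditions of the two-wave solution imply
`Σ_j 1/(α_{j,1}α_{j,2}) = 0` and `Σ_j 1/α_{j,1}² = Σ_j 1/α_{j,2}²`. -/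
theorem stmt11
    (b α : Fin 3 → Fin 2 → ℝ) (hα : ∀ i n, α i n ≠ 0)
    (hbα : ∀ n : Fin 2, ∑ j : Fin 3, b j n / α j n = 0)
    (hc1 : ∀ i : Fin 3, b i 0 * ∑ j : Fin 3, b j 1 / α j 0 = 1 / α i 1)
    (hc2 : ∀ i : Fin 3, b i 1 * ∑ j : Fin 3, b j 0 / α j 1 = 1 / α i 0) :
    (∑ j : Fin 3, 1 / (α j 0 * α j 1) = 0) ∧
    (∑ j : Fin 3, 1 / (α j 0) ^ 2 = ∑ j : Fin 3, 1 / (α j 1) ^ 2) :=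
  stmt11_general b α hbα hc1 hc2
end
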